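/- Let k be an algebraically closed field of characteristic p > 0 and let a = (a_n), b = (b_n) be digit sequences. Then there exist units u_n of the subring k((t))^{p^n} ⊆ k((t)) with t^{a_n p^n} = u_n · t^{b_n p^n} · u_{n+1}⁻¹ in k((t)) for all n ≥ 0 if and only if the difference of p-adic integers ∑_{n≥0} a_n p^n − ∑_{n≥0} b_n p^n lies in ℤ ⊆ ℤ_p; equivalently, if and only if there exists m ∈ ℤ such that ∑_{n<N} (a_n − b_n) p^n ≡ m (mod p^N) for every N ≥ 0. (Together with the existence of monomial representatives, this identifies the group of isomorphism classes of stratified line bundles on k((t)), i.e., R¹lim_n 𝔾_m(k((t))^{p^n}), with ℤ_p/ℤ.) -/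

import Mathlib

/-!
Written as `t^{(aₙ-bₙ)pⁿ} uₙ₊₁ = uₙ`, the cocycle condition telescopes to `u_N = t^{-D_N} u₀`
with `D_N = ∑_{n<N} (aₙ - bₙ) pⁿ`. An exponent `m` occurring in `u₀` gives the exponent
`m - D_N` of `u_N ∈ k((t))^{p^N}`, so `D_N ≡ m (mod p^N)`; conversely, such an `m` makes
`u_N = t^{m - D_N}` a cocycle of monomial units.
-/

/-- The element `t` of `k((t))`. -/
noncomputable def tt (k : Type*) [Field k] : LaurentSeries k := HahnSeries.single 1 1

/-- `f ∈ k((t))` lies in the subring `k((t))^{pⁿ}` of `pⁿ`-th powers: since `k` is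
perfect, this means exactly that the support of `f` consists of multiples of `pⁿ`. -/
def InLaurentSeriesPow (k : Type*) [Field k] (p n : ℕ) (f : LaurentSeries k) : Prop :=
  ∀ i ∈ f.support, ((p : ℤ) ^ n) ∣ i

/-- `f` is a unit of the subring `k((t))^{pⁿ}`. -/
def IsUnitLaurentSeriesPow (k : Type*) [Field k] (p n : ℕ) (f : LaurentSeries k) : Prop :=
  InLaurentSeriesPow k p n f ∧ ∃ g, InLaurentSeriesPow k p n g ∧ f * g = 1

open HahnSeries Finset

section

variable {k : Type*} [Field k]

theorem tt_pow (m : ℕ) : tt k ^ m = single (m : ℤ) (1 : k) := by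
  rw [tt, single_pow, one_pow, nsmul_eq_mul, mul_one]

theorem inLaurentSeriesPow_single {p n : ℕ} {e : ℤ} (he : (p : ℤ) ^ n ∣ e) (r : k) :
    InLaurentSeriesPow k p n (single e r) :=
  fun _ hi => (support_single_subset hi : _ = e) ▸ he

theorem isUnitLaurentSeriesPow_single_one {p n : ℕ} {e : ℤ} (he : (p : ℤ) ^ n ∣ e) :
    IsUnitLaurentSeriesPow k p n (single e 1) := by
  refine ⟨inLaurentSeriesPow_single he 1, single (-e) 1,
    inLaurentSeriesPow_single he.neg_right 1, ?_⟩
  rw [single_mul_single, add_neg_cancel, one_mul, single_zero_one]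

theorem IsUnitLaurentSeriesPow.ne_zero {p n : ℕ} {f : LaurentSeries k}
    (hf : IsUnitLaurentSeriesPow k p n f) : f ≠ 0 :=
  let ⟨_, _, _, hfg⟩ := hf
  left_ne_zero_of_mul_eq_one hfg

theorem InLaurentSeriesPow.dvd_add_of_single_mul {p n : ℕ} {e i : ℤ} {f : LaurentSeries k}
    (h : InLaurentSeriesPow k p n (single e 1 * f)) (hi : i ∈ f.support) :
    (p : ℤ) ^ n ∣ i + e :=
  h _ (by rwa [mem_support, coeff_single_mul_add, one_mul])

theorem single_one_eq_mul_single_one_mul_inv_iff {A B : ℤ} {u w : LaurentSeries k}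
    (hw : w ≠ 0) : single A (1 : k) = u * single B 1 * w⁻¹ ↔ single (A - B) 1 * w = u := by
  have hB : (single B (1 : k) : LaurentSeries k) ≠ 0 := single_ne_zero one_ne_zero
  rw [eq_mul_inv_iff_mul_eq₀ hw]
  conv_rhs => rw [← mul_left_inj' hB, mul_right_comm, single_mul_single, sub_add_cancel, one_mul]

theorem eq_single_neg_sum_mul_of_single_mul_succ {e : ℕ → ℤ} {u : ℕ → LaurentSeries k}
    (h : ∀ n, single (e n) 1 * u (n + 1) = u n) (N : ℕ) :
    u N = single (-∑ n ∈ range N, e n) 1 * u 0 := by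
  induction N with
  | zero => simp
  | succ N ih =>
    calc u (N + 1) = single (-e N) 1 * (single (e N) 1 * u (N + 1)) := by
          rw [← mul_assoc, single_mul_single, neg_add_cancel, one_mul, single_zero_one, one_mul]
      _ = single (-∑ n ∈ range (N + 1), e n) 1 * u 0 := by
          rw [h N, ih, ← mul_assoc, single_mul_single, one_mul, sum_range_succ, neg_add,
            add_comm]

theorem exists_units_single_mul_succ_eq_iff (p : ℕ) (e : ℕ → ℤ) :
    (∃ u : ℕ → LaurentSeries k, (∀ n, IsUnitLaurentSeriesPow k p n (u n)) ∧
        ∀ n, single (e n) 1 * u (n + 1) = u n) ↔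
      ∃ m : ℤ, ∀ N : ℕ, (p : ℤ) ^ N ∣ (∑ n ∈ range N, e n) - m := by
  constructor
  · rintro ⟨u, hu, h⟩
    obtain ⟨m, hm⟩ := support_nonempty_iff.2 (hu 0).ne_zero
    refine ⟨m, fun N => ?_⟩
    have hN := eq_single_neg_sum_mul_of_single_mul_succ h N ▸ (hu N).1
    rw [← dvd_neg, neg_sub, sub_eq_add_neg]
    exact hN.dvd_add_of_single_mul hm
  · rintro ⟨m, hm⟩
    refine ⟨fun N => single (m - ∑ n ∈ range N, e n) 1,
      fun N => isUnitLaurentSeriesPow_single_one ?_, fun n => ?_⟩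
    · rw [← dvd_neg, neg_sub]
      exact hm N
    · rw [single_mul_single, one_mul, sum_range_succ]
      exact congrArg (single · 1) (by ring)

end

theorem stratified_line_bundles_isomorphic_iff_general
    (k : Type*) [Field k] (p : ℕ)
    (a b : ℕ → ℕ) :
    (∃ u : ℕ → LaurentSeries k,
        (∀ n, IsUnitLaurentSeriesPow k p n (u n)) ∧
          ∀ n, (tt k) ^ (a n * p ^ n) =
            u n * (tt k) ^ (b n * p ^ n) * (u (n + 1))⁻¹)
      ↔ ∃ m : ℤ, ∀ N : ℕ,
          ((p : ℤ) ^ N) ∣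
            (∑ n ∈ Finset.range N, ((a n : ℤ) - (b n : ℤ)) * (p : ℤ) ^ n) - m := by
  rw [← exists_units_single_mul_succ_eq_iff (k := k)]
  refine exists_congr fun u => and_congr_right fun hu => forall_congr' fun n => ?_
  have hexp : ((a n * p ^ n : ℕ) : ℤ) - (b n * p ^ n : ℕ) = ((a n : ℤ) - b n) * p ^ n := by
    push_cast
    ring
  rw [tt_pow, tt_pow, single_one_eq_mul_single_one_mul_inv_iff (hu (n + 1)).ne_zero, hexp]

/-- **`O(a) ≅ O(b)` on `k((t))` iff `a − b ∈ ℤ ⊆ ℤₚ`.**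
For digit sequences `a, b` there exist units `u n` of `k((t))^{pⁿ}` with
`t^{aₙ pⁿ} = uₙ · t^{bₙ pⁿ} · u_{n+1}⁻¹` for all `n` iff the difference of `p`-adic
integers `∑ aₙ pⁿ − ∑ bₙ pⁿ` is a rational integer, i.e. iff there is `m ∈ ℤ` with
`∑_{n<N} (aₙ − bₙ) pⁿ ≡ m (mod p^N)` for all `N`. -/
theorem stratified_line_bundles_isomorphic_iff
    (k : Type*) [Field k] [IsAlgClosed k] (p : ℕ) [CharP k p] (hp : 0 < p)
    (a b : ℕ → ℕ) (ha : ∀ n, a n < p) (hb : ∀ n, b n < p) :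
    (∃ u : ℕ → LaurentSeries k,
        (∀ n, IsUnitLaurentSeriesPow k p n (u n)) ∧
          ∀ n, (tt k) ^ (a n * p ^ n) =
            u n * (tt k) ^ (b n * p ^ n) * (u (n + 1))⁻¹)
      ↔ ∃ m : ℤ, ∀ N : ℕ,
          ((p : ℤ) ^ N) ∣
            (∑ n ∈ Finset.range N, ((a n : ℤ) - (b n : ℤ)) * (p : ℤ) ^ n) - m :=
  stratified_line_bundles_isomorphic_iff_general k p a b
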